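/- arXiv:funct-an/9312005 — 6 statements merged into one kernel-verified Lean document; each statement's English description precedes it below -/
import Mathlib

section
/- Let H be a real Hilbert space, F : H → H a monotone map, x⁰ ∈ H, and r₀ > 0 such that F is bounded on the closed ball S(r₀, x⁰) with c₀ = sup{‖F(ξ)‖ : ξ ∈ S(r₀, x⁰)} < ∞. Then for every x ∈ H, ⟨F(x), x - x⁰⟩ ≥ r₀ ‖F(x)‖ - c₀ (‖x - x⁰‖ + r₀). -/
/-!
Monotonicity compares `F x` with the value of `F` at the point `ξ = x⁰ + (r₀ / ‖F x‖) • F x` of the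
ball, where `|⟪F ξ, x - ξ⟫| ≤ c₀ ‖x - ξ‖ ≤ c₀ (‖x - x⁰‖ + r₀)`; the shift from `x⁰` to `ξ` costs
exactly `⟪F x, ξ - x⁰⟫ = r₀ ‖F x‖`.
-/

open scoped RealInnerProductSpace

section

variable {H : Type*} [NormedAddCommGroup H] [InnerProductSpace ℝ H]

-- For `v = 0` the junk value `r / 0 = 0` keeps both lemmas true.
lemma real_inner_self_smul_div_norm (v : H) (r : ℝ) : ⟪v, (r / ‖v‖) • v⟫ = r * ‖v‖ := by
  rcases eq_or_ne v 0 with rfl | hv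
  · simp
  · rw [real_inner_smul_right, real_inner_self_eq_norm_sq]
    field_simp [norm_ne_zero_iff.mpr hv]

lemma norm_smul_div_norm_le (v : H) {r : ℝ} (hr : 0 ≤ r) : ‖(r / ‖v‖) • v‖ ≤ r := by
  rcases eq_or_ne v 0 with rfl | hv
  · simpa using hr
  · rw [norm_smul, Real.norm_eq_abs, abs_of_nonneg (by positivity),
      div_mul_cancel₀ _ (norm_ne_zero_iff.mpr hv)]

lemma neg_mul_norm_le_inner_of_monotone {F : H → H}
    (hmono : ∀ x y : H, ⟪F x - F y, x - y⟫ ≥ 0) {ξ : H} {c : ℝ} (hξ : ‖F ξ‖ ≤ c) (x : H) :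
    -(c * ‖x - ξ‖) ≤ ⟪F x, x - ξ⟫ := by
  have hbound : -(c * ‖x - ξ‖) ≤ ⟪F ξ, x - ξ⟫ :=
    calc -(c * ‖x - ξ‖) ≤ -(‖F ξ‖ * ‖x - ξ‖) := by gcongr
      _ ≤ ⟪F ξ, x - ξ⟫ := neg_le_of_abs_le (abs_real_inner_le_norm _ _)
  have hmon := hmono x ξ
  rw [inner_sub_left] at hmon
  linarith

end

theorem monotone_lower_bound_hilbert_general
    {H : Type*} [NormedAddCommGroup H] [InnerProductSpace ℝ H]
    (F : H → H) (hmono : ∀ x y : H, (inner ℝ (F x - F y) (x - y) : ℝ) ≥ 0)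
    (x0 : H) (r0 : ℝ) (hr0 : 0 < r0) (c0 : ℝ)
    (hc0 : ∀ ξ ∈ Metric.closedBall x0 r0, ‖F ξ‖ ≤ c0) :
    ∀ x : H, (inner ℝ (F x) (x - x0) : ℝ) ≥ r0 * ‖F x‖ - c0 * (‖x - x0‖ + r0) := by
  intro x
  set u : H := (r0 / ‖F x‖) • F x
  have hu : ‖u‖ ≤ r0 := norm_smul_div_norm_le (F x) hr0.le
  have hc0_nonneg : 0 ≤ c0 := (norm_nonneg _).trans (hc0 x0 (Metric.mem_closedBall_self hr0.le))
  have hξ : ‖F (x0 + u)‖ ≤ c0 := hc0 _ (by simpa [Metric.mem_closedBall, dist_eq_norm] using hu)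
  have hsub : x - (x0 + u) = (x - x0) - u := by abel
  have hmon := neg_mul_norm_le_inner_of_monotone hmono hξ x
  have hdist : ‖(x - x0) - u‖ ≤ ‖x - x0‖ + r0 := (norm_sub_le _ _).trans (by gcongr)
  rw [hsub, inner_sub_right, real_inner_self_smul_div_norm] at hmon
  linarith [mul_le_mul_of_nonneg_left hdist hc0_nonneg]

/-- For a monotone F : H → H bounded by c₀ on the closed ball S(r₀, x⁰),
⟨F x, x - x⁰⟩ ≥ r₀‖F x‖ - c₀(‖x - x⁰‖ + r₀) for all x. -/
theorem monotone_lower_bound_hilbert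
    {H : Type*} [NormedAddCommGroup H] [InnerProductSpace ℝ H] [CompleteSpace H]
    (F : H → H) (hmono : ∀ x y : H, (inner ℝ (F x - F y) (x - y) : ℝ) ≥ 0)
    (x0 : H) (r0 : ℝ) (hr0 : 0 < r0) (c0 : ℝ)
    (hc0 : ∀ ξ ∈ Metric.closedBall x0 r0, ‖F ξ‖ ≤ c0) :
    ∀ x : H, (inner ℝ (F x) (x - x0) : ℝ) ≥ r0 * ‖F x‖ - c0 * (‖x - x0‖ + r0) :=
  monotone_lower_bound_hilbert_general F hmono x0 r0 hr0 c0 hc0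
end

section
/- Let B be a real reflexive Banach space with duality mapping J, and let F : B → B* be a monotone map that is bounded on the closed ball S(r₀, x⁰) of radius r₀ > 0 around x⁰, with c₀ = sup{‖F(ξ)‖_{B*} : ξ ∈ S(r₀, x⁰)} < ∞. Then for all x ∈ B, ⟨F(x), x - x⁰⟩ ≥ r₀ ‖F(x)‖_{B*} - c₀(‖x - x⁰‖ + r₀). -/
/-- For a monotone F : B → B* bounded by c₀ on the closed ball S(r₀, x⁰)
in a real reflexive Banach space B, ⟨F x, x - x⁰⟩ ≥ r₀‖F x‖ - c₀(‖x - x⁰‖ + r₀). -/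
theorem monotone_lower_bound_banach
    {B : Type*} [NormedAddCommGroup B] [NormedSpace ℝ B]
    (F : B → (B →L[ℝ] ℝ))
    (hmono : ∀ x y : B, (F x - F y) (x - y) ≥ 0)
    (x0 : B) (r0 : ℝ) (hr0 : 0 < r0) (c0 : ℝ)
    (hc0 : ∀ ξ ∈ Metric.closedBall x0 r0, ‖F ξ‖ ≤ c0) :
    ∀ x : B, F x (x - x0) ≥ r0 * ‖F x‖ - c0 * (‖x - x0‖ + r0) := by
  intro x
  set f := F x with hf
  set M := f (x - x0) + c0 * (‖x - x0‖ + r0) with hM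
  have hc0' : 0 ≤ c0 := le_trans (norm_nonneg _) (hc0 x0 (by simp [hr0.le]))
  have key : ∀ u : B, ‖u‖ ≤ 1 → r0 * f u ≤ M := by
    intro u hu
    set ξ := x0 + r0 • u with hξ
    have hmem : ξ ∈ Metric.closedBall x0 r0 := by
      simp only [Metric.mem_closedBall, dist_eq_norm, hξ, add_sub_cancel_left,
        norm_smul, Real.norm_eq_abs, abs_of_pos hr0]
      calc r0 * ‖u‖ ≤ r0 * 1 := by
            exact mul_le_mul_of_nonneg_left hu hr0.le
        _ = r0 := mul_one r0
    have h1 := hmono x ξ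
    rw [ContinuousLinearMap.sub_apply] at h1
    have h2 : F ξ (x - ξ) ≤ f (x - ξ) := by linarith
    have hn : ‖x - ξ‖ ≤ ‖x - x0‖ + r0 := by
      have hxi : x - ξ = (x - x0) - r0 • u := by rw [hξ]; abel
      calc ‖x - ξ‖ = ‖(x - x0) - r0 • u‖ := by rw [hxi]
        _ ≤ ‖x - x0‖ + ‖r0 • u‖ := norm_sub_le _ _
        _ ≤ ‖x - x0‖ + r0 := by
            have : ‖r0 • u‖ = r0 * ‖u‖ := by
              rw [norm_smul, Real.norm_eq_abs, abs_of_pos hr0]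
            rw [this]
            have : r0 * ‖u‖ ≤ r0 := by
              calc r0 * ‖u‖ ≤ r0 * 1 := mul_le_mul_of_nonneg_left hu hr0.le
                _ = r0 := mul_one r0
            linarith
    have habs : |F ξ (x - ξ)| ≤ c0 * (‖x - x0‖ + r0) := by
      calc |F ξ (x - ξ)| ≤ ‖F ξ‖ * ‖x - ξ‖ := (F ξ).le_opNorm _
        _ ≤ c0 * (‖x - x0‖ + r0) :=
            mul_le_mul (hc0 ξ hmem) hn (norm_nonneg _) hc0'
    have h3 : -(c0 * (‖x - x0‖ + r0)) ≤ F ξ (x - ξ) := by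
      have := neg_abs_le (F ξ (x - ξ)); linarith
    have hdecomp : f (x - ξ) = f (x - x0) - r0 * f u := by
      have hxi : x - ξ = (x - x0) - r0 • u := by rw [hξ]; abel
      rw [hxi, map_sub, map_smul, smul_eq_mul]
    linarith
  have hMnonneg : 0 ≤ M := by
    have := key 0 (by simp)
    simpa using this
  have hnorm : ‖f‖ ≤ M / r0 := by
    apply ContinuousLinearMap.opNorm_le_bound f (div_nonneg hMnonneg hr0.le)
    intro u
    rcases eq_or_ne u 0 with rfl | hu
    · simp
    · have hun : 0 < ‖u‖ := norm_pos_iff.mpr hu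
      set v := ‖u‖⁻¹ • u with hv
      have hvn : ‖v‖ = 1 := by
        rw [hv, norm_smul, Real.norm_eq_abs, abs_of_pos (inv_pos.mpr hun),
          inv_mul_cancel₀ hun.ne']
      have k1 := key v hvn.le
      have k2 := key (-v) (by rw [norm_neg, hvn])
      rw [map_neg] at k2
      have hfv : |f v| ≤ M / r0 := by
        rw [abs_le]
        constructor
        · have : -f v ≤ M / r0 := (le_div_iff₀' hr0).mpr k2
          linarith
        · exact (le_div_iff₀' hr0).mpr k1
      have hfu : f u = ‖u‖ * f v := by
        rw [hv, map_smul, smul_eq_mul]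
        field_simp
      rw [hfu, Real.norm_eq_abs, abs_mul, abs_of_pos hun, mul_comm (M / r0) ‖u‖]
      exact mul_le_mul_of_nonneg_left hfv hun.le
  have : r0 * ‖f‖ ≤ M := by
    rw [mul_comm]
    exact (le_div_iff₀ hr0).mp hnorm
  rw [hM] at this
  linarith
end

section
/- In a real Hilbert space H, let A : H → H be a monotone map, Ω ⊆ H a nonempty bounded closed convex set, and ε > 0. Suppose x_ε satisfies A x_ε + ε⁻¹(x_ε - P_Ω x_ε) = f for some f ∈ H. Then for every x₀ ∈ Ω, ‖x_ε - P_Ω x_ε‖² ≤ ε ‖f - A x₀‖ ‖x_ε - x₀‖. -/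
/-- For the penalty equation A x_ε + ε⁻¹(x_ε - P_Ω x_ε) = f with A
monotone and Ω bounded closed convex, ‖x_ε - P_Ω x_ε‖² ≤ ε‖f - A x₀‖‖x_ε - x₀‖
for every x₀ ∈ Ω. -/
theorem penalty_residual_bound
    {H : Type*} [NormedAddCommGroup H] [InnerProductSpace ℝ H] [CompleteSpace H]
    (Ω : Set H) (hne : Ω.Nonempty) (hbdd : Bornology.IsBounded Ω)
    (hcl : IsClosed Ω) (hconv : Convex ℝ Ω)
    (P : H → H) (hPmem : ∀ x, P x ∈ Ω)
    (hPproj : ∀ x, ∀ ξ ∈ Ω, ‖x - P x‖ ≤ ‖x - ξ‖)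
    (A : H → H) (hmono : ∀ x y : H, (inner ℝ (A x - A y) (x - y) : ℝ) ≥ 0)
    (f : H) (ε : ℝ) (hε : 0 < ε) (xe : H)
    (heq : A xe + ε⁻¹ • (xe - P xe) = f) :
    ∀ x0 ∈ Ω, ‖xe - P xe‖ ^ 2 ≤ ε * ‖f - A x0‖ * ‖xe - x0‖ := by
  intro x0 hx0
  haveI : Nonempty Ω := ⟨⟨x0, hx0⟩⟩
  -- variational inequality for the projection
  have hvar : ∀ w ∈ Ω, (inner ℝ (xe - P xe) (w - P xe) : ℝ) ≤ 0 := by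
    have hinf : ‖xe - P xe‖ = ⨅ w : Ω, ‖xe - w‖ := by
      apply le_antisymm
      · exact le_ciInf fun w => hPproj xe w w.2
      · have hb : BddBelow (Set.range fun w : Ω => ‖xe - (w : H)‖) := by
          refine ⟨0, ?_⟩; rintro r ⟨w, rfl⟩; exact norm_nonneg _
        exact ciInf_le hb ⟨P xe, hPmem xe⟩
    exact (norm_eq_iInf_iff_real_inner_le_zero hconv (hPmem xe)).mp hinf
  -- ‖xe - P xe‖² ≤ ⟨xe - P xe, xe - x0⟩
  have h1 : ‖xe - P xe‖ ^ 2 ≤ (inner ℝ (xe - P xe) (xe - x0) : ℝ) := by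
    have := hvar x0 hx0
    have hid : (inner ℝ (xe - P xe) (xe - x0) : ℝ)
        = ‖xe - P xe‖ ^ 2 + inner ℝ (xe - P xe) (P xe - x0) := by
      rw [← real_inner_self_eq_norm_sq, ← inner_add_right]
      congr 1; abel
    have h2 : (inner ℝ (xe - P xe) (P xe - x0) : ℝ) ≥ 0 := by
      have : (inner ℝ (xe - P xe) (x0 - P xe) : ℝ) ≤ 0 := hvar x0 hx0
      have h3 : (inner ℝ (xe - P xe) (P xe - x0) : ℝ)
          = -(inner ℝ (xe - P xe) (x0 - P xe) : ℝ) := by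
        rw [← inner_neg_right]; congr 1; abel
      linarith
    linarith [hid]
  -- xe - P xe = ε • (f - A xe)
  have hres : xe - P xe = ε • (f - A xe) := by
    have : ε⁻¹ • (xe - P xe) = f - A xe := by
      rw [← heq]; abel
    rw [← this, smul_smul, mul_inv_cancel₀ hε.ne', one_smul]
  have h4 : (inner ℝ (xe - P xe) (xe - x0) : ℝ)
      = ε * (inner ℝ (f - A xe) (xe - x0) : ℝ) := by
    rw [hres, real_inner_smul_left]
  -- monotonicity: ⟨f - A xe, xe - x0⟩ ≤ ⟨f - A x0, xe - x0⟩
  have h5 : (inner ℝ (f - A xe) (xe - x0) : ℝ) ≤ inner ℝ (f - A x0) (xe - x0) := by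
    have hm := hmono xe x0
    have : (inner ℝ (f - A x0) (xe - x0) : ℝ) - inner ℝ (f - A xe) (xe - x0)
        = inner ℝ (A xe - A x0) (xe - x0) := by
      rw [← inner_sub_left]; congr 1; abel
    linarith
  have h6 : (inner ℝ (f - A x0) (xe - x0) : ℝ) ≤ ‖f - A x0‖ * ‖xe - x0‖ :=
    real_inner_le_norm _ _
  calc ‖xe - P xe‖ ^ 2 ≤ (inner ℝ (xe - P xe) (xe - x0) : ℝ) := h1
    _ = ε * inner ℝ (f - A xe) (xe - x0) := h4
    _ ≤ ε * inner ℝ (f - A x0) (xe - x0) := by nlinarith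
    _ ≤ ε * (‖f - A x0‖ * ‖xe - x0‖) := by nlinarith
    _ = ε * ‖f - A x0‖ * ‖xe - x0‖ := by ring
end

section
/- In a real Hilbert space H, let Ω be a nonempty closed convex set, A : H → H monotone, f ∈ H, ε > 0, and let x_ε satisfy A x_ε + ε⁻¹(x_ε - P_Ω x_ε) = f. Then for all x ∈ Ω and all y ∈ H with A monotone, ⟨A x - f, x - x_ε⟩ ≥ 0; in particular ⟨A x_ε - f, x - x_ε⟩ ≥ 0 for every x ∈ Ω. -/
/-- For a solution x_ε of the penalty equation, ⟨A x - f, x - x_ε⟩ ≥ 0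
for all x ∈ Ω, and ⟨A x_ε - f, x - x_ε⟩ ≥ 0 for all x ∈ Ω. -/
theorem penalty_solution_inequalities
    {H : Type*} [NormedAddCommGroup H] [InnerProductSpace ℝ H] [CompleteSpace H]
    (Ω : Set H) (hne : Ω.Nonempty) (hcl : IsClosed Ω) (hconv : Convex ℝ Ω)
    (P : H → H) (hPmem : ∀ x, P x ∈ Ω)
    (hPproj : ∀ x, ∀ ξ ∈ Ω, ‖x - P x‖ ≤ ‖x - ξ‖)
    (A : H → H) (hmono : ∀ x y : H, (inner ℝ (A x - A y) (x - y) : ℝ) ≥ 0)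
    (f : H) (ε : ℝ) (hε : 0 < ε) (xe : H)
    (heq : A xe + ε⁻¹ • (xe - P xe) = f) :
    (∀ x ∈ Ω, (inner ℝ (A x - f) (x - xe) : ℝ) ≥ 0) ∧
    (∀ x ∈ Ω, (inner ℝ (A xe - f) (x - xe) : ℝ) ≥ 0) := by
  -- projection characterization
  have hproj : ∀ w ∈ Ω, (inner ℝ (xe - P xe) (w - P xe) : ℝ) ≤ 0 := by
    haveI : Nonempty Ω := hne.to_subtype
    have hiInf : ‖xe - P xe‖ = ⨅ w : Ω, ‖xe - w‖ := by
      refine le_antisymm (le_ciInf fun w => hPproj xe w w.2) ?_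
      have hbdd : BddBelow (Set.range fun w : Ω => ‖xe - w‖) :=
        ⟨0, fun b hb => by obtain ⟨w, rfl⟩ := hb; exact norm_nonneg _⟩
      exact ciInf_le hbdd ⟨P xe, hPmem xe⟩
    exact (norm_eq_iInf_iff_real_inner_le_zero hconv (hPmem xe)).mp hiInf
  have key : ∀ x ∈ Ω, (inner ℝ (A xe - f) (x - xe) : ℝ) ≥ 0 := by
    intro x hx
    have hAf : A xe - f = -(ε⁻¹ • (xe - P xe)) := by
      rw [← heq]; abel
    have h1 : (inner ℝ (xe - P xe) (x - xe) : ℝ) ≤ 0 := by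
      have h2 := hproj x hx
      have h3 : (inner ℝ (xe - P xe) (x - xe) : ℝ)
          = inner ℝ (xe - P xe) (x - P xe) - inner ℝ (xe - P xe) (xe - P xe) := by
        rw [← inner_sub_right]; congr 1; abel
      rw [h3]
      have := real_inner_self_nonneg (x := xe - P xe)
      linarith
    rw [hAf, inner_neg_left, real_inner_smul_left]
    nlinarith [inv_pos.mpr hε]
  refine ⟨fun x hx => ?_, key⟩
  have h4 : (inner ℝ (A x - f) (x - xe) : ℝ)
      = inner ℝ (A x - A xe) (x - xe) + inner ℝ (A xe - f) (x - xe) := by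
    rw [← inner_add_left]; congr 1; abel
  rw [h4]
  have := hmono x xe
  have := key x hx
  linarith
end

section
/- Let H be a real Hilbert space, Ω₁ and Ω₂ nonempty closed convex subsets with Hausdorff distance at most σ, and x ∈ H. Then ‖P_{Ω₁} x - P_{Ω₂} x‖² ≤ σ (‖x - P_{Ω₁}x‖ + ‖x - P_{Ω₂}x‖ + σ). -/
open RealInnerProductSpace

lemma proj_var_ineq {H : Type*} [NormedAddCommGroup H] [InnerProductSpace ℝ H]
    {K : Set H} (hc : Convex ℝ K) {x v : H} (hv : v ∈ K)
    (hmin : ∀ ξ ∈ K, ‖x - v‖ ≤ ‖x - ξ‖) : ∀ w ∈ K, ⟪x - v, w - v⟫ ≤ 0 := by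
  rw [← norm_eq_iInf_iff_real_inner_le_zero hc hv]
  haveI : Nonempty K := ⟨⟨v, hv⟩⟩
  refine le_antisymm (le_ciInf fun w => hmin w w.2) ?_
  have hbdd : BddBelow (Set.range fun w : K => ‖x - w‖) :=
    ⟨0, Set.forall_mem_range.2 fun w => norm_nonneg _⟩
  exact ciInf_le hbdd ⟨v, hv⟩

/-- If the Hausdorff distance between Ω₁ and Ω₂ is at most σ, then
‖P_{Ω₁}x - P_{Ω₂}x‖² ≤ σ(‖x - P_{Ω₁}x‖ + ‖x - P_{Ω₂}x‖ + σ). -/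
theorem projections_proximity
    {H : Type*} [NormedAddCommGroup H] [InnerProductSpace ℝ H] [CompleteSpace H]
    (Ω₁ Ω₂ : Set H) (hne₁ : Ω₁.Nonempty) (hne₂ : Ω₂.Nonempty)
    (hcl₁ : IsClosed Ω₁) (hcl₂ : IsClosed Ω₂)
    (hconv₁ : Convex ℝ Ω₁) (hconv₂ : Convex ℝ Ω₂)
    (σ : ℝ) (hσ : 0 ≤ σ)
    (hH₁ : ∀ a ∈ Ω₁, ∃ b ∈ Ω₂, ‖a - b‖ ≤ σ)
    (hH₂ : ∀ b ∈ Ω₂, ∃ a ∈ Ω₁, ‖b - a‖ ≤ σ)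
    (P₁ P₂ : H → H) (hP₁mem : ∀ x, P₁ x ∈ Ω₁) (hP₂mem : ∀ x, P₂ x ∈ Ω₂)
    (hP₁proj : ∀ x, ∀ ξ ∈ Ω₁, ‖x - P₁ x‖ ≤ ‖x - ξ‖)
    (hP₂proj : ∀ x, ∀ ξ ∈ Ω₂, ‖x - P₂ x‖ ≤ ‖x - ξ‖)
    (x : H) :
    ‖P₁ x - P₂ x‖ ^ 2 ≤ σ * (‖x - P₁ x‖ + ‖x - P₂ x‖ + σ) := by
  set p₁ := P₁ x
  set p₂ := P₂ x
  obtain ⟨b, hb, hbσ⟩ := hH₁ p₁ (hP₁mem x)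
  obtain ⟨a, ha, haσ⟩ := hH₂ p₂ (hP₂mem x)
  have v₁ := proj_var_ineq hconv₁ (hP₁mem x) (hP₁proj x) a ha
  have v₂ := proj_var_ineq hconv₂ (hP₂mem x) (hP₂proj x) b hb
  -- ⟪x - p₁, p₂ - p₁⟫ ≤ ⟪x - p₁, p₂ - a⟫ ≤ ‖x - p₁‖ σ
  have h₁ : ⟪x - p₁, p₂ - p₁⟫ ≤ ‖x - p₁‖ * σ := by
    have : ⟪x - p₁, p₂ - p₁⟫ = ⟪x - p₁, a - p₁⟫ + ⟪x - p₁, p₂ - a⟫ := by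
      rw [← inner_add_right]; congr 1; abel
    rw [this]
    have h2 : ⟪x - p₁, p₂ - a⟫ ≤ ‖x - p₁‖ * σ := by
      calc ⟪x - p₁, p₂ - a⟫ ≤ ‖x - p₁‖ * ‖p₂ - a‖ := real_inner_le_norm _ _
        _ ≤ ‖x - p₁‖ * σ := by
            exact mul_le_mul_of_nonneg_left haσ (norm_nonneg _)
    linarith
  have h₂ : ⟪x - p₂, p₁ - p₂⟫ ≤ ‖x - p₂‖ * σ := by
    have : ⟪x - p₂, p₁ - p₂⟫ = ⟪x - p₂, b - p₂⟫ + ⟪x - p₂, p₁ - b⟫ := by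
      rw [← inner_add_right]; congr 1; abel
    rw [this]
    have h2 : ⟪x - p₂, p₁ - b⟫ ≤ ‖x - p₂‖ * σ := by
      calc ⟪x - p₂, p₁ - b⟫ ≤ ‖x - p₂‖ * ‖p₁ - b‖ := real_inner_le_norm _ _
        _ ≤ ‖x - p₂‖ * σ := mul_le_mul_of_nonneg_left hbσ (norm_nonneg _)
    linarith
  have key : ‖p₁ - p₂‖ ^ 2 = ⟪x - p₂, p₁ - p₂⟫ + ⟪x - p₁, p₂ - p₁⟫ := by
    rw [← real_inner_self_eq_norm_sq]
    have : (p₁ - p₂) = (x - p₂) - (x - p₁) := by abel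
    rw [show ⟪x - p₁, p₂ - p₁⟫ = -⟪x - p₁, p₁ - p₂⟫ by
      rw [← inner_neg_right]; congr 1; abel]
    nth_rw 1 [this]
    rw [inner_sub_left]
    ring
  have hσ₂ : 0 ≤ σ * σ := mul_nonneg hσ hσ
  nlinarith [norm_nonneg (x - p₁), norm_nonneg (x - p₂)]
end

section
/- Let H be a real Hilbert space, A : H → H monotone, Ω a nonempty bounded closed convex set with 0 ∈ Ω, and ε > 0. Then the operator T x = A x + ε⁻¹(x - P_Ω x) is coercive: ⟨Tx, x⟩ / ‖x‖ → ∞ as ‖x‖ → ∞, provided A is bounded on bounded sets. -/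
/-- The penalty operator T x = A x + ε⁻¹(x - P_Ω x) is coercive when A
is monotone and bounded on bounded sets, and Ω is bounded closed convex with 0 ∈ Ω. -/
theorem penalty_operator_coercive
    {H : Type*} [NormedAddCommGroup H] [InnerProductSpace ℝ H] [CompleteSpace H]
    (Ω : Set H) (hne : Ω.Nonempty) (hbdd : Bornology.IsBounded Ω)
    (hcl : IsClosed Ω) (hconv : Convex ℝ Ω) (h0 : (0 : H) ∈ Ω)
    (P : H → H) (hPmem : ∀ x, P x ∈ Ω)
    (hPproj : ∀ x, ∀ ξ ∈ Ω, ‖x - P x‖ ≤ ‖x - ξ‖)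
    (A : H → H) (hmono : ∀ x y : H, (inner ℝ (A x - A y) (x - y) : ℝ) ≥ 0)
    (hAbdd : ∀ s : Set H, Bornology.IsBounded s → Bornology.IsBounded (A '' s))
    (ε : ℝ) (hε : 0 < ε) :
    ∀ M : ℝ, ∃ N : ℝ, ∀ x : H, ‖x‖ ≥ N →
      (inner ℝ (A x + ε⁻¹ • (x - P x)) x : ℝ) / ‖x‖ ≥ M := by
  intro M
  obtain ⟨R, hR⟩ := isBounded_iff_forall_norm_le.1 hbdd
  have hR0 : 0 ≤ R := le_trans (by simp) (hR 0 h0)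
  set a := ‖A 0‖ with ha
  refine ⟨max (max (4 * R) 1) (4 * ε * (M + a)), fun x hx => ?_⟩
  set t := ‖x‖ with htdef
  have ht4R : t ≥ 4 * R := le_trans (le_max_left _ _) (le_trans (le_max_left _ _) hx)
  have ht1 : t ≥ 1 := le_trans (le_max_right _ _) (le_trans (le_max_left _ _) hx)
  have htM : t ≥ 4 * ε * (M + a) := le_trans (le_max_right _ _) hx
  have ht0 : 0 < t := lt_of_lt_of_le one_pos ht1
  set s := ‖x - P x‖ with hsdef
  have hs0 : 0 ≤ s := norm_nonneg _
  have hεinv : 0 < ε⁻¹ := inv_pos.2 hε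
  -- monotonicity at 0
  have h1 : (inner ℝ (A x) x : ℝ) ≥ inner ℝ (A 0) x := by
    have := hmono x 0
    rw [sub_zero, inner_sub_left] at this
    linarith
  have h2 : (inner ℝ (A 0) x : ℝ) ≥ -(a * t) := by
    have := abs_real_inner_le_norm (A 0) x
    have h' := neg_abs_le (inner ℝ (A 0) x : ℝ)
    linarith
  -- projection term
  have h3 : (inner ℝ (x - P x) x : ℝ) = s ^ 2 + inner ℝ (x - P x) (P x) := by
    have hx' : x = (x - P x) + P x := by abel
    calc (inner ℝ (x - P x) x : ℝ) = inner ℝ (x - P x) ((x - P x) + P x) := by rw [← hx']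
      _ = inner ℝ (x - P x) (x - P x) + inner ℝ (x - P x) (P x) := by rw [inner_add_right]
      _ = s ^ 2 + inner ℝ (x - P x) (P x) := by
        rw [real_inner_self_eq_norm_sq]
  have hPx : ‖P x‖ ≤ R := hR _ (hPmem x)
  have h4 : (inner ℝ (x - P x) (P x) : ℝ) ≥ -(s * R) := by
    have h' := abs_real_inner_le_norm (x - P x) (P x)
    have h'' := neg_abs_le (inner ℝ (x - P x) (P x) : ℝ)
    nlinarith [norm_nonneg (P x)]
  have h5 : s ≥ t - R := by
    have := norm_sub_norm_le x (P x)
    linarith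
  have key : s ^ 2 - s * R ≥ t ^ 2 / 4 := by
    nlinarith [sq_nonneg (s - (t - R)), mul_nonneg (sub_nonneg.2 ht4R.le) ht0.le]
  have h6 : (inner ℝ (x - P x) x : ℝ) ≥ t ^ 2 / 4 := by
    rw [h3]; linarith
  have h7 : ε⁻¹ * (inner ℝ (x - P x) x : ℝ) ≥ ε⁻¹ * (t ^ 2 / 4) :=
    mul_le_mul_of_nonneg_left h6 hεinv.le
  have h8 : ε⁻¹ * (t ^ 2 / 4) ≥ (M + a) * t := by
    have hcancel : ε * ε⁻¹ = 1 := mul_inv_cancel₀ hε.ne'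
    nlinarith [mul_pos hεinv ht0, mul_le_mul_of_nonneg_left htM (mul_pos hεinv ht0).le]
  rw [ge_iff_le, le_div_iff₀ ht0, inner_add_left, real_inner_smul_left]
  nlinarith
end
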